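/- Let d ≥ 1, let Ω ⊆ ℝ^d be a bounded measurable set, let ρ : ℝ^d → ℝ be a nonnegative integrable function with associated measure π(A) = ∫_A ρ(x) dx, let dist : ℝ^d × ℝ^d → ℝ be a continuous nonnegative function, let y_1, …, y_K ∈ ℝ^d, and let w ∈ ℝ^K. Let V_k = {x ∈ Ω : dist(x,y_k) − w_k ≤ dist(x,y_j) − w_j for all j, with strict inequality for all j < k} be the tie-broken power cells. Then for every collection R_1, …, R_K of pairwise disjoint measurable subsets of Ω with ∪_k R_k = Ω and π(R_k) = π(V_k) for all k, one has Σ_{k=1}^K ∫_{V_k} dist(x,y_k) ρ(x) dx ≤ Σ_{k=1}^K ∫_{R_k} dist(x,y_k) ρ(x) dx; that is, the power diagram minimizes the total transport cost Q(R_1,…,R_K) = Σ_k ∫_{R_k} dist(x,y_k) dπ among all measurable partitions of Ω with the same capacities. -/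

import Mathlib

/-!
With `φ x = min_j (dst x (y j) - w j)` one has `dst x (y k) ≥ φ x + w k` everywhere, with equality
on the power cell `V k`. Hence the cost of any partition `R` of `Ω` is at least
`∫_Ω φ dπ + ∑ k, w k * π (R k)`, while the power diagram attains this value with `π (V k)` in
place of `π (R k)`; equal capacities make the two values equal.
-/

open MeasureTheory Function

/-- The tie-broken power cell of the generator `y k` with weight `w k` in `Ω`: points of `Ω`
where `dst x (y k) - w k` is minimal among all generators, with ties assigned to the
smallest index. -/
def powerCell {d K : ℕ} (Ω : Set (EuclideanSpace ℝ (Fin d)))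
    (dst : EuclideanSpace ℝ (Fin d) → EuclideanSpace ℝ (Fin d) → ℝ)
    (y : Fin K → EuclideanSpace ℝ (Fin d)) (w : Fin K → ℝ) (k : Fin K) :
    Set (EuclideanSpace ℝ (Fin d)) :=
  {x ∈ Ω | (∀ j, dst x (y k) - w k ≤ dst x (y j) - w j) ∧
    ∀ j, j < k → dst x (y k) - w k < dst x (y j) - w j}

structure IsMeasurablePartition {X ι : Type*} [MeasurableSpace X] (Ω : Set X) (S : ι → Set X) :
    Prop where
  measurableSet : ∀ i, MeasurableSet (S i)
  pairwise_disjoint : Pairwise (Disjoint on S)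
  iUnion_eq : ⋃ i, S i = Ω

namespace IsMeasurablePartition

variable {X ι : Type*} [MeasurableSpace X] {μ : Measure X} {Ω : Set X} {S : ι → Set X}

theorem subset (hS : IsMeasurablePartition Ω S) (i : ι) : S i ⊆ Ω :=
  hS.iUnion_eq ▸ Set.subset_iUnion S i

theorem integrableOn_iff [Finite ι] (hS : IsMeasurablePartition Ω S) {f : X → ℝ} :
    IntegrableOn f Ω μ ↔ ∀ i, IntegrableOn f (S i) μ := by
  rw [← hS.iUnion_eq, integrableOn_finite_iUnion]

theorem sum_setIntegral [Fintype ι] (hS : IsMeasurablePartition Ω S) {f : X → ℝ}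
    (hf : IntegrableOn f Ω μ) : ∑ i, ∫ x in S i, f x ∂μ = ∫ x in Ω, f x ∂μ := by
  rw [← integral_iUnion_fintype hS.measurableSet hS.pairwise_disjoint
    fun i => hf.mono_set (hS.subset i), hS.iUnion_eq]

theorem sum_setIntegral_add_mul [Fintype ι] (hS : IsMeasurablePartition Ω S) {φ ρ : X → ℝ}
    (w : ι → ℝ) (hφ : IntegrableOn (fun x => φ x * ρ x) Ω μ) (hρ : IntegrableOn ρ Ω μ) :
    ∑ i, ∫ x in S i, (φ x + w i) * ρ x ∂μ
      = ∫ x in Ω, φ x * ρ x ∂μ + ∑ i, w i * ∫ x in S i, ρ x ∂μ := by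
  simp_rw [add_mul]
  rw [Finset.sum_congr rfl fun i _ => integral_add (hφ.mono_set (hS.subset i))
    ((hρ.mono_set (hS.subset i)).const_mul (w i)), Finset.sum_add_distrib, hS.sum_setIntegral hφ]
  simp_rw [integral_const_mul]

end IsMeasurablePartition

section CapacityConstrained

variable {X ι : Type*} [MeasurableSpace X] [Fintype ι] {μ : Measure X} {Ω : Set X}
  {V R : ι → Set X} {c : ι → X → ℝ} {w : ι → ℝ} {ρ : X → ℝ}

theorem sum_setIntegral_mul_le_of_potential (hV : IsMeasurablePartition Ω V)
    (hR : IsMeasurablePartition Ω R) (φ : X → ℝ) (hρ0 : ∀ x ∈ Ω, 0 ≤ ρ x)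
    (hρ : IntegrableOn ρ Ω μ) (hc : ∀ i, IntegrableOn (fun x => c i x * ρ x) Ω μ)
    (hφ_le : ∀ i, ∀ x ∈ Ω, φ x + w i ≤ c i x) (hφ_eq : ∀ i, ∀ x ∈ V i, c i x = φ x + w i)
    (hcap : ∀ i, ∫ x in R i, ρ x ∂μ = ∫ x in V i, ρ x ∂μ) :
    ∑ i, ∫ x in V i, c i x * ρ x ∂μ ≤ ∑ i, ∫ x in R i, c i x * ρ x ∂μ := by
  have hφ : IntegrableOn (fun x => φ x * ρ x) Ω μ := hV.integrableOn_iff.2 fun i =>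
    (((hc i).mono_set (hV.subset i)).sub ((hρ.mono_set (hV.subset i)).const_mul (w i))).congr_fun
      (fun x hx => by simp only [Pi.sub_apply, hφ_eq i x hx]; ring) (hV.measurableSet i)
  have hφw : ∀ i, IntegrableOn (fun x => (φ x + w i) * ρ x) Ω μ := fun i => by
    simp_rw [add_mul]
    exact hφ.add (hρ.const_mul (w i))
  calc ∑ i, ∫ x in V i, c i x * ρ x ∂μ
      = ∑ i, ∫ x in V i, (φ x + w i) * ρ x ∂μ := Finset.sum_congr rfl fun i _ =>
        setIntegral_congr_fun (hV.measurableSet i) fun x hx => by simp only [hφ_eq i x hx]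
    _ = ∫ x in Ω, φ x * ρ x ∂μ + ∑ i, w i * ∫ x in V i, ρ x ∂μ :=
        hV.sum_setIntegral_add_mul w hφ hρ
    _ = ∑ i, ∫ x in R i, (φ x + w i) * ρ x ∂μ := by
        simp_rw [← hcap]
        exact (hR.sum_setIntegral_add_mul w hφ hρ).symm
    _ ≤ ∑ i, ∫ x in R i, c i x * ρ x ∂μ := Finset.sum_le_sum fun i _ =>
        setIntegral_mono_on ((hφw i).mono_set (hR.subset i)) ((hc i).mono_set (hR.subset i))
          (hR.measurableSet i) fun x hx =>
            mul_le_mul_of_nonneg_right (hφ_le i x (hR.subset i hx)) (hρ0 x (hR.subset i hx))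

theorem sum_setIntegral_mul_le_of_forall_sub_le (hV : IsMeasurablePartition Ω V)
    (hR : IsMeasurablePartition Ω R) (hρ0 : ∀ x ∈ Ω, 0 ≤ ρ x) (hρ : IntegrableOn ρ Ω μ)
    (hc : ∀ i, IntegrableOn (fun x => c i x * ρ x) Ω μ)
    (hVmin : ∀ i, ∀ x ∈ V i, ∀ j, c i x - w i ≤ c j x - w j)
    (hcap : ∀ i, ∫ x in R i, ρ x ∂μ = ∫ x in V i, ρ x ∂μ) :
    ∑ i, ∫ x in V i, c i x * ρ x ∂μ ≤ ∑ i, ∫ x in R i, c i x * ρ x ∂μ := by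
  refine sum_setIntegral_mul_le_of_potential (w := w) hV hR (fun x => ⨅ j, c j x - w j) hρ0 hρ hc
    (fun i x _ => ?_) (fun i x hx => ?_) hcap
  · linarith [ciInf_le (Finite.bddBelow_range fun j => c j x - w j) i]
  · have : Nonempty ι := ⟨i⟩
    linarith [ciInf_le (Finite.bddBelow_range fun j => c j x - w j) i, le_ciInf (hVmin i x hx)]

end CapacityConstrained

section PowerCell

variable {d K : ℕ} {Ω : Set (EuclideanSpace ℝ (Fin d))}
  {dst : EuclideanSpace ℝ (Fin d) → EuclideanSpace ℝ (Fin d) → ℝ}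
  {y : Fin K → EuclideanSpace ℝ (Fin d)} {w : Fin K → ℝ}

theorem measurableSet_powerCell (hΩ : MeasurableSet Ω)
    (hdst : ∀ k, Measurable fun x => dst x (y k)) (k : Fin K) :
    MeasurableSet (powerCell Ω dst y w k) := by
  have hsub : ∀ j, Measurable fun x => dst x (y j) - w j := fun j => (hdst j).sub_const _
  exact Measurable.setOf <| hΩ.mem.and <|
    (Measurable.forall fun j => (measurableSet_le (hsub k) (hsub j)).mem).and <|
    Measurable.forall fun j => Measurable.forall fun _ => (measurableSet_lt (hsub k) (hsub j)).mem

theorem pairwise_disjoint_powerCell : Pairwise (Disjoint on powerCell Ω dst y w) := by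
  intro k l hkl
  refine Set.disjoint_left.2 fun x hk hl => ?_
  rcases hkl.lt_or_gt with h | h
  · exact (hl.2.2 k h).not_ge (hk.2.1 l)
  · exact (hk.2.2 l h).not_ge (hl.2.1 k)

theorem iUnion_powerCell (hK : 0 < K) : ⋃ k, powerCell Ω dst y w k = Ω := by
  refine Set.Subset.antisymm (Set.iUnion_subset fun k x hx => hx.1) fun x hx => ?_
  have : Nonempty (Fin K) := ⟨⟨0, hK⟩⟩
  -- the cell of `x` is the lexicographic minimizer of `(dst x (y j) - w j, j)`
  obtain ⟨k, hk⟩ := Finite.exists_min fun j => toLex (dst x (y j) - w j, j)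
  have hlex := fun j => Prod.Lex.toLex_le_toLex'.1 (hk j)
  exact Set.mem_iUnion.2 ⟨k, hx, fun j => (hlex j).1,
    fun j hjk => (hlex j).1.lt_of_ne fun heq => hjk.not_ge ((hlex j).2 heq)⟩

end PowerCell

theorem stmt_18_general (d K : ℕ) (hK : 0 < K)
    (Ω : Set (EuclideanSpace ℝ (Fin d)))
    (hΩb : Bornology.IsBounded Ω) (hΩm : MeasurableSet Ω)
    (ρ : EuclideanSpace ℝ (Fin d) → ℝ) (hρ0 : ∀ x, 0 ≤ ρ x) (hρi : Integrable ρ)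
    (dst : EuclideanSpace ℝ (Fin d) → EuclideanSpace ℝ (Fin d) → ℝ)
    (hdstc : Continuous fun p : EuclideanSpace ℝ (Fin d) × EuclideanSpace ℝ (Fin d) => dst p.1 p.2)
    (y : Fin K → EuclideanSpace ℝ (Fin d)) (w : Fin K → ℝ)
    (R : Fin K → Set (EuclideanSpace ℝ (Fin d)))
    (hRm : ∀ k, MeasurableSet (R k))
    (hRdisj : Pairwise fun k l => Disjoint (R k) (R l))
    (hRunion : (⋃ k, R k) = Ω)
    (hRcap : ∀ k, (∫ x in R k, ρ x) = ∫ x in powerCell Ω dst y w k, ρ x) :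
    ∑ k, ∫ x in powerCell Ω dst y w k, dst x (y k) * ρ x
      ≤ ∑ k, ∫ x in R k, dst x (y k) * ρ x := by
  have hcont : ∀ k, Continuous fun x => dst x (y k) := fun k =>
    hdstc.comp (Continuous.prodMk_left (y k))
  have hV : IsMeasurablePartition Ω (powerCell Ω dst y w) :=
    ⟨measurableSet_powerCell hΩm fun k => (hcont k).measurable, pairwise_disjoint_powerCell,
      iUnion_powerCell hK⟩
  exact sum_setIntegral_mul_le_of_forall_sub_le hV ⟨hRm, hRdisj, hRunion⟩ (fun x _ => hρ0 x)
    hρi.integrableOn (fun k => .continuousOn_mul_of_subset (hcont k).continuousOn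
      hρi.integrableOn hΩb.isCompact_closure hΩm subset_closure)
    (fun k x hx => hx.2.1) hRcap

theorem stmt_18 (d K : ℕ) (hd : 1 ≤ d) (hK : 0 < K)
    (Ω : Set (EuclideanSpace ℝ (Fin d)))
    (hΩb : Bornology.IsBounded Ω) (hΩm : MeasurableSet Ω)
    (ρ : EuclideanSpace ℝ (Fin d) → ℝ) (hρ0 : ∀ x, 0 ≤ ρ x) (hρi : Integrable ρ)
    (dst : EuclideanSpace ℝ (Fin d) → EuclideanSpace ℝ (Fin d) → ℝ)
    (hdstc : Continuous fun p : EuclideanSpace ℝ (Fin d) × EuclideanSpace ℝ (Fin d) => dst p.1 p.2)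
    (hdst0 : ∀ x y, 0 ≤ dst x y)
    (y : Fin K → EuclideanSpace ℝ (Fin d)) (w : Fin K → ℝ)
    (R : Fin K → Set (EuclideanSpace ℝ (Fin d)))
    (hRm : ∀ k, MeasurableSet (R k))
    (hRsub : ∀ k, R k ⊆ Ω)
    (hRdisj : Pairwise fun k l => Disjoint (R k) (R l))
    (hRunion : (⋃ k, R k) = Ω)
    (hRcap : ∀ k, (∫ x in R k, ρ x) = ∫ x in powerCell Ω dst y w k, ρ x) :
    ∑ k, ∫ x in powerCell Ω dst y w k, dst x (y k) * ρ x
      ≤ ∑ k, ∫ x in R k, dst x (y k) * ρ x :=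
  stmt_18_general d K hK Ω hΩb hΩm ρ hρ0 hρi dst hdstc y w R hRm hRdisj hRunion hRcap
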